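/- In the setting of the approximate renewal inequalities: let r1 and r2 be the unique bounded nonnegative functions on [0,T] with r1(t) = (1−η)e^{(1−η)t} on [0,1), r1(t) = (1−η)∫_{t-1}^t r1(u) du on [1,T], and similarly r2 with 1+η in place of 1−η. If r is right continuous and satisfies the strict inequalities (1−η)e^{(1−η)t} < r(t) < (1+η)e^{(1+η)t} on [0,1) and (1−η)∫_{t-1}^t r(u) du < r(t) < (1+η)∫_{t-1}^t r(u) du on [1,T], then r1(t) ≤ r(t) ≤ r2(t) for all t ∈ [0,T]. -/

import Mathlib

/-!
Consider the first time `t₀` at which the strict inequalities `r1 < r < r2` fail. They hold on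
`[t₀ - 1, t₀)`, so integrating them over that window and comparing with the renewal equations
for `r1`, `r2` and the strict renewal inequalities for `r` shows that they still hold strictly
at `t₀`; right continuity of `r`, `r1` and `r2` then carries them past `t₀`, a contradiction.
Right continuity of `r1` and `r2` comes from their being multiples of sliding-window integrals,
which requires them to be integrable; for a bounded solution of the renewal equation this
follows from the same first-failure argument.
-/

open MeasureTheory Set Filter Topology

theorem forall_mem_Icc_of_eventually_nhdsWithin_Icc {α : Type*}
    [ConditionallyCompleteLinearOrder α] [TopologicalSpace α] [OrderTopology α]
    {P : α → Prop} {a b : α}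
    (h : ∀ t ∈ Icc a b, (∀ s ∈ Ico a t, P s) → ∀ᶠ s in 𝓝[Icc t b] t, P s) :
    ∀ t ∈ Icc a b, P t := by
  by_contra! hfail
  obtain ⟨x, hxI, hxP⟩ := hfail
  set F := {t ∈ Icc a b | ¬P t}
  have hx : x ∈ F := ⟨hxI, hxP⟩
  have hbdd : BddBelow F := ⟨a, fun y hy => hy.1.1⟩
  have hF_sub : F ⊆ Icc (sInf F) b := fun y hy => ⟨csInf_le hbdd hy, hy.1.2⟩
  have hmem : sInf F ∈ Icc a b :=
    ⟨le_csInf ⟨x, hx⟩ fun y hy => hy.1.1, (hF_sub hx).1.trans hxI.2⟩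
  have hbelow : ∀ s ∈ Ico a (sInf F), P s := fun s hs => by
    by_contra hPs
    exact (csInf_le hbdd ⟨⟨hs.1, hs.2.le.trans hmem.2⟩, hPs⟩).not_gt hs.2
  have : (𝓝[F] sInf F).NeBot :=
    mem_closure_iff_nhdsWithin_neBot.1 (csInf_mem_closure ⟨x, hx⟩ hbdd)
  have hP : ∀ᶠ s in 𝓝[F] sInf F, P s := nhdsWithin_mono _ hF_sub (h _ hmem hbelow)
  obtain ⟨s, hPs, hs⟩ := (hP.and self_mem_nhdsWithin).exists
  exact hs.2 hPs

theorem integrableOn_Icc_of_forall_lt {E : Type*} [NormedAddCommGroup E] {f : ℝ → E}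
    {a b C : ℝ}
    (hbd : ∀ x ∈ Icc a b, ‖f x‖ ≤ C) (h : ∀ s ∈ Ico a b, IntegrableOn f (Icc a s)) :
    IntegrableOn f (Icc a b) := by
  rw [integrableOn_Icc_iff_integrableOn_Ico]
  rcases le_or_gt b a with hba | hab
  · simp [Ico_eq_empty_of_le hba]
  obtain ⟨u, -, hu, hlim⟩ := exists_seq_strictMono_tendsto' hab
  have hcover : Ico a b = ⋃ n, Icc a (u n) := by
    rw [← Ici_inter_Iio, ← iUnion_Iic_eq_Iio_of_lt_of_tendsto (fun n => (hu n).2) hlim,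
      inter_iUnion]
    rfl
  have hmeas : AEStronglyMeasurable f (volume.restrict (Ico a b)) := by
    rw [hcover, aestronglyMeasurable_iUnion_iff]
    exact fun n => (h (u n) ⟨(hu n).1.le, (hu n).2⟩).aestronglyMeasurable
  exact (integrable_const C).mono' hmeas <| (ae_restrict_iff' measurableSet_Ico).2 <|
    ae_of_all _ fun x hx => hbd x (Ico_subset_Icc_self hx)

theorem integrableOn_Icc_of_eqOn_Ico {E : Type*} [NormedAddCommGroup E] {f g : ℝ → E}
    {a b : ℝ}
    (hg : ContinuousOn g (Icc a b)) (hfg : EqOn f g (Ico a b)) : IntegrableOn f (Icc a b) := by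
  rw [integrableOn_Icc_iff_integrableOn_Ico]
  exact (hg.integrableOn_Icc.mono_set Ico_subset_Icc_self).congr_fun hfg.symm measurableSet_Ico

theorem continuousOn_intervalIntegral_sub_one {E : Type*} [NormedAddCommGroup E]
    [NormedSpace ℝ E] {f : ℝ → E} {a b : ℝ} (hf : IntegrableOn f (Icc a b)) :
    ContinuousOn (fun t => ∫ u in (t - 1)..t, f u) (Icc (a + 1) b) := by
  rcases lt_or_ge b (a + 1) with hba | hab
  · simp [Icc_eq_empty_of_lt hba]
  have hprim : ContinuousOn (fun x => ∫ u in a..x, f u) (Icc a b) := by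
    rw [← uIcc_of_le (by linarith : a ≤ b)] at hf ⊢
    exact intervalIntegral.continuousOn_primitive_interval hf
  have hint : ∀ x ∈ Icc a b, IntervalIntegrable f volume a x := fun x hx =>
    (intervalIntegrable_iff_integrableOn_Icc_of_le hx.1).2
      (hf.mono_set (Icc_subset_Icc_right hx.2))
  have hsub : ∀ t ∈ Icc (a + 1) b, t - 1 ∈ Icc a b := fun t ht =>
    ⟨by linarith [ht.1], by linarith [ht.2]⟩
  have hsub' : Icc (a + 1) b ⊆ Icc a b := Icc_subset_Icc_left (by linarith)
  refine ((hprim.mono hsub').sub (hprim.comp (continuous_sub_right 1).continuousOn hsub)).congr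
    fun t ht => ?_
  exact (intervalIntegral.integral_interval_sub_left (hint t (hsub' ht)) (hint _ (hsub t ht))).symm

section Renewal

variable {f : ℝ → ℝ} {c T : ℝ}

theorem integrableOn_Icc_of_renewal {C : ℝ} (hbd : ∀ t ∈ Icc 0 T, ‖f t‖ ≤ C)
    (h01 : IntegrableOn f (Icc 0 1))
    (hf : ∀ t, 1 ≤ t → t ≤ T → f t = c * ∫ u in (t - 1)..t, f u) :
    IntegrableOn f (Icc 0 T) := by
  rcases lt_or_ge T 0 with hT | hT
  · simp [Icc_eq_empty_of_lt hT]
  refine forall_mem_Icc_of_eventually_nhdsWithin_Icc (P := fun s => IntegrableOn f (Icc 0 s))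
    (fun t ht hlt => ?_) T ⟨hT, le_rfl⟩
  have hft : IntegrableOn f (Icc 0 t) :=
    integrableOn_Icc_of_forall_lt (fun x hx => hbd x ⟨hx.1, hx.2.trans ht.2⟩) hlt
  rcases lt_or_ge t 1 with ht1 | ht1
  · filter_upwards [nhdsWithin_le_nhds (Iio_mem_nhds ht1)] with s hs
    exact h01.mono_set (Icc_subset_Icc_right hs.le)
  by_cases hwin : ∃ u ∈ Ioc t (t + 1), u ≤ T ∧ IntervalIntegrable f volume (u - 1) u
  · obtain ⟨u, hu, -, hfu⟩ := hwin
    have hfu' : IntegrableOn f (Icc 0 u) :=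
      (hft.union (hfu.1.mono_set (Ioc_subset_Ioc_left (by linarith [hu.2])))).mono_set
        Icc_subset_Icc_union_Ioc
    filter_upwards [nhdsWithin_le_nhds (Iio_mem_nhds hu.1)] with s hs
    exact hfu'.mono_set (Icc_subset_Icc_right hs.le)
  · push Not at hwin
    -- the integral over a non-integrable window is `0`, so `f` vanishes right after `t`
    have hzero : ∀ u ∈ Ioc t (t + 1), u ≤ T → f u = 0 := fun u hu huT => by
      rw [hf u (by linarith [hu.1]) huT, intervalIntegral.integral_undef (hwin u hu huT),
        mul_zero]
    filter_upwards [self_mem_nhdsWithin, nhdsWithin_le_nhds (Iio_mem_nhds (lt_add_one t))]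
      with s hs hs1
    have hfs : IntegrableOn f (Ioc t s) := integrableOn_zero.congr_fun
      (fun u hu => (hzero u ⟨hu.1, hu.2.trans hs1.le⟩ (hu.2.trans hs.2)).symm)
      measurableSet_Ioc
    exact (hft.union hfs).mono_set Icc_subset_Icc_union_Ioc

theorem intervalIntegrable_and_continuousOn_of_renewal
    (hnonneg : ∀ t, 0 ≤ t → t ≤ T → 0 ≤ f t)
    (hbdd : ∃ C : ℝ, ∀ t, 0 ≤ t → t ≤ T → f t ≤ C)
    (hinit : ∀ t, 0 ≤ t → t < 1 → f t = c * Real.exp (c * t))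
    (hf : ∀ t, 1 ≤ t → t ≤ T → f t = c * ∫ u in (t - 1)..t, f u) :
    (∀ t ∈ Icc 1 T, IntervalIntegrable f volume (t - 1) t) ∧ ContinuousOn f (Icc 1 T) := by
  obtain ⟨C, hC⟩ := hbdd
  have hint : IntegrableOn f (Icc 0 T) := by
    refine integrableOn_Icc_of_renewal (C := C) (fun t ht => ?_)
      (integrableOn_Icc_of_eqOn_Ico (by fun_prop) fun t ht => hinit t ht.1 ht.2) hf
    rw [Real.norm_of_nonneg (hnonneg t ht.1 ht.2)]
    exact hC t ht.1 ht.2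
  refine ⟨fun t ht => (intervalIntegrable_iff_integrableOn_Icc_of_le (by linarith)).2
    (hint.mono_set (Icc_subset_Icc (by linarith [ht.1]) ht.2)), ?_⟩
  have := (continuousOn_intervalIntegral_sub_one hint).const_smul c
  rw [zero_add] at this
  exact this.congr fun t ht => hf t ht.1 ht.2

theorem lt_and_lt_of_renewal_window {g g₁ g₂ : ℝ → ℝ} {c₁ c₂ t : ℝ}
    (hc₁ : 0 ≤ c₁) (hc₂ : 0 ≤ c₂)
    (hg₁ : IntervalIntegrable g₁ volume (t - 1) t)
    (hg₂ : IntervalIntegrable g₂ volume (t - 1) t)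
    (hg₁t : g₁ t = c₁ * ∫ u in (t - 1)..t, g₁ u)
    (hg₂t : g₂ t = c₂ * ∫ u in (t - 1)..t, g₂ u)
    (hgt : c₁ * (∫ u in (t - 1)..t, g u) < g t ∧ g t < c₂ * (∫ u in (t - 1)..t, g u))
    (hwin : ∀ s ∈ Ioo (t - 1) t, g₁ s < g s ∧ g s < g₂ s) :
    g₁ t < g t ∧ g t < g₂ t := by
  obtain ⟨hlo, hhi⟩ := hgt
  -- a non-integrable window would have integral `0`, and then `hgt` would read `0 < g t < 0`
  have hg : IntervalIntegrable g volume (t - 1) t :=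
    intervalIntegral.intervalIntegrable_of_integral_ne_zero fun h0 => by
      rw [h0, mul_zero] at hlo hhi
      linarith
  have hle : t - 1 ≤ t := by linarith
  constructor
  · rw [hg₁t]
    refine lt_of_le_of_lt (mul_le_mul_of_nonneg_left ?_ hc₁) hlo
    exact intervalIntegral.integral_mono_on_of_le_Ioo hle hg₁ hg fun s hs => (hwin s hs).1.le
  · rw [hg₂t]
    refine lt_of_lt_of_le hhi (mul_le_mul_of_nonneg_left ?_ hc₂)
    exact intervalIntegral.integral_mono_on_of_le_Ioo hle hg hg₂ fun s hs => (hwin s hs).2.le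

theorem stmt6_general (η T : ℝ) (hη0 : 0 < η) (hη1 : η < 1)
    (r r1 r2 : ℝ → ℝ)
    (hr1nonneg : ∀ t, 0 ≤ t → t ≤ T → 0 ≤ r1 t)
    (hr1bdd : ∃ C : ℝ, ∀ t, 0 ≤ t → t ≤ T → r1 t ≤ C)
    (hr1a : ∀ t, 0 ≤ t → t < 1 → r1 t = (1 - η) * Real.exp ((1 - η) * t))
    (hr1b : ∀ t, 1 ≤ t → t ≤ T → r1 t = (1 - η) * ∫ u in (t - 1)..t, r1 u)
    (hr2nonneg : ∀ t, 0 ≤ t → t ≤ T → 0 ≤ r2 t)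
    (hr2bdd : ∃ C : ℝ, ∀ t, 0 ≤ t → t ≤ T → r2 t ≤ C)
    (hr2a : ∀ t, 0 ≤ t → t < 1 → r2 t = (1 + η) * Real.exp ((1 + η) * t))
    (hr2b : ∀ t, 1 ≤ t → t ≤ T → r2 t = (1 + η) * ∫ u in (t - 1)..t, r2 u)
    (hrc : ∀ t, 0 ≤ t → t ≤ T → ContinuousWithinAt r (Set.Icc t T) t)
    (hra : ∀ t, 0 ≤ t → t < 1 →
      (1 - η) * Real.exp ((1 - η) * t) < r t ∧ r t < (1 + η) * Real.exp ((1 + η) * t))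
    (hrb : ∀ t, 1 ≤ t → t ≤ T →
      (1 - η) * (∫ u in (t - 1)..t, r u) < r t ∧ r t < (1 + η) * (∫ u in (t - 1)..t, r u)) :
    ∀ t, 0 ≤ t → t ≤ T → r1 t ≤ r t ∧ r t ≤ r2 t := by
  obtain ⟨hr1int, hr1cont⟩ :=
    intervalIntegrable_and_continuousOn_of_renewal hr1nonneg hr1bdd hr1a hr1b
  obtain ⟨hr2int, hr2cont⟩ :=
    intervalIntegrable_and_continuousOn_of_renewal hr2nonneg hr2bdd hr2a hr2b
  have hstrict : ∀ t ∈ Icc 0 T, r1 t < r t ∧ r t < r2 t := by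
    refine forall_mem_Icc_of_eventually_nhdsWithin_Icc fun t ht hbelow => ?_
    rcases lt_or_ge t 1 with ht1 | ht1
    · filter_upwards [self_mem_nhdsWithin, nhdsWithin_le_nhds (Iio_mem_nhds ht1)] with s hs hs1
      rw [hr1a s (ht.1.trans hs.1) hs1, hr2a s (ht.1.trans hs.1) hs1]
      exact hra s (ht.1.trans hs.1) hs1
    have ht' : t ∈ Icc 1 T := ⟨ht1, ht.2⟩
    have hlt : r1 t < r t ∧ r t < r2 t :=
      lt_and_lt_of_renewal_window (by linarith) (by linarith) (hr1int t ht') (hr2int t ht')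
        (hr1b t ht1 ht.2) (hr2b t ht1 ht.2) (hrb t ht1 ht.2)
        fun s hs => hbelow s ⟨by linarith [hs.1], hs.2⟩
    have hsub : Icc t T ⊆ Icc 1 T := Icc_subset_Icc_left ht1
    exact (((hr1cont t ht').mono hsub).eventually_lt (hrc t ht.1 ht.2) hlt.1).and
      ((hrc t ht.1 ht.2).eventually_lt ((hr2cont t ht').mono hsub) hlt.2)
  exact fun t ht0 htT => (hstrict t ⟨ht0, htT⟩).imp le_of_lt le_of_lt

/-- If `r1` (resp. `r2`) is the bounded nonnegative solution of the renewal-type equation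
with factor `1-η` (resp. `1+η`), and `r` is right continuous and satisfies the strict
approximate renewal inequalities, then `r1 t ≤ r t ≤ r2 t` on `[0,T]`. -/
theorem stmt6 (η T : ℝ) (hη0 : 0 < η) (hη1 : η < 1) (hT : 1 < T)
    (r r1 r2 : ℝ → ℝ)
    (hr1nonneg : ∀ t, 0 ≤ t → t ≤ T → 0 ≤ r1 t)
    (hr1bdd : ∃ C : ℝ, ∀ t, 0 ≤ t → t ≤ T → r1 t ≤ C)
    (hr1a : ∀ t, 0 ≤ t → t < 1 → r1 t = (1 - η) * Real.exp ((1 - η) * t))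
    (hr1b : ∀ t, 1 ≤ t → t ≤ T → r1 t = (1 - η) * ∫ u in (t - 1)..t, r1 u)
    (hr2nonneg : ∀ t, 0 ≤ t → t ≤ T → 0 ≤ r2 t)
    (hr2bdd : ∃ C : ℝ, ∀ t, 0 ≤ t → t ≤ T → r2 t ≤ C)
    (hr2a : ∀ t, 0 ≤ t → t < 1 → r2 t = (1 + η) * Real.exp ((1 + η) * t))
    (hr2b : ∀ t, 1 ≤ t → t ≤ T → r2 t = (1 + η) * ∫ u in (t - 1)..t, r2 u)
    (hrc : ∀ t, 0 ≤ t → t ≤ T → ContinuousWithinAt r (Set.Icc t T) t)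
    (hra : ∀ t, 0 ≤ t → t < 1 →
      (1 - η) * Real.exp ((1 - η) * t) < r t ∧ r t < (1 + η) * Real.exp ((1 + η) * t))
    (hrb : ∀ t, 1 ≤ t → t ≤ T →
      (1 - η) * (∫ u in (t - 1)..t, r u) < r t ∧ r t < (1 + η) * (∫ u in (t - 1)..t, r u)) :
    ∀ t, 0 ≤ t → t ≤ T → r1 t ≤ r t ∧ r t ≤ r2 t :=
  stmt6_general η T hη0 hη1 r r1 r2 hr1nonneg hr1bdd hr1a hr1b hr2nonneg hr2bdd hr2a hr2b hrc hra
    hrb
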